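/- In the one-dimensional long-range percolation model on {0,...,N} with s = 2 and β > 0, the probability that a fixed node i ∈ {1,...,N-1} is a cut node (no edge (j,k) with j < i < k) is at least exp(-β·Σ_{n=1}^{N}(n-1)/n²), which is Θ(N^{-β}). -/

import Mathlib

/-!
Node `i` is a cut node iff none of the independent edges `(j, k)` with `j < i < k ≤ N` is
present, so its probability is the product of the factors `exp (-β / (k - j) ^ 2)` over these
pairs. At most `n - 1` of them have length `n`, which bounds the exponent by
`β * ∑ (n - 1) / n ^ 2`. That sum is the harmonic number `H_N` minus a partial sum of the
convergent series `∑ 1 / n ^ 2`, hence `log N + O(1)`, which gives the order `N ^ (-β)`.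
-/

open MeasureTheory ProbabilityTheory Finset Real

lemma ProbabilityTheory.iIndepSet.measure_biInter_compl {Ω ι : Type*} [MeasurableSpace Ω]
    {μ : Measure Ω} {s : ι → Set Ω} (h : iIndepSet s μ) (S : Finset ι) :
    μ (⋂ i ∈ S, (s i)ᶜ) = ∏ i ∈ S, μ (s i)ᶜ :=
  ((iIndepSet_iff_iIndep _ _).1 h).meas_biInter fun _ _ ↦
    (MeasurableSpace.measurableSet_generateFrom (Set.mem_singleton _)).compl

def crossingPairs (i N : ℕ) : Finset (ℕ × ℕ) := range i ×ˢ Ioc i N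

@[simp]
lemma mem_crossingPairs {i N : ℕ} {p : ℕ × ℕ} :
    p ∈ crossingPairs i N ↔ p.1 < i ∧ i < p.2 ∧ p.2 ≤ N := by
  simp [crossingPairs]

lemma card_crossingPairs_filter_sub_eq_le (i N n : ℕ) :
    #{p ∈ crossingPairs i N | p.2 - p.1 = n} ≤ n - 1 := by
  have hfst_mem : ∀ p ∈ {p ∈ crossingPairs i N | p.2 - p.1 = n}, p.1 ∈ Ico (i + 1 - n) i := by
    intro p hp
    simp only [mem_filter, mem_crossingPairs, mem_Ico] at hp ⊢
    omega
  have hinj : Set.InjOn Prod.fst (SetLike.coe {p ∈ crossingPairs i N | p.2 - p.1 = n}) := by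
    intro p hp q hq hpq
    simp only [mem_coe, mem_filter, mem_crossingPairs] at hp hq
    exact Prod.ext hpq (by omega)
  have := card_le_card_of_injOn Prod.fst hfst_mem hinj
  rw [Nat.card_Ico] at this
  omega

lemma sum_crossingPairs_le {i N : ℕ} (f : ℕ → ℝ) (hf : ∀ n, 0 ≤ f n) :
    ∑ p ∈ crossingPairs i N, f (p.2 - p.1) ≤ ∑ n ∈ Icc 1 N, ((n : ℝ) - 1) * f n := by
  have hmaps : ∀ p ∈ crossingPairs i N, p.2 - p.1 ∈ Icc 1 N := by
    intro p hp
    simp only [mem_crossingPairs, mem_Icc] at hp ⊢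
    omega
  rw [← sum_fiberwise_of_maps_to hmaps]
  refine sum_le_sum fun n hn ↦ ?_
  have hcard : (#{p ∈ crossingPairs i N | p.2 - p.1 = n} : ℝ) ≤ (n : ℝ) - 1 := by
    rw [← Nat.cast_one, ← Nat.cast_sub (mem_Icc.1 hn).1]
    exact_mod_cast card_crossingPairs_filter_sub_eq_le i N n
  calc ∑ p ∈ crossingPairs i N with p.2 - p.1 = n, f (p.2 - p.1)
      = #{p ∈ crossingPairs i N | p.2 - p.1 = n} * f n := by
        rw [sum_congr rfl fun p hp ↦ by rw [(mem_filter.1 hp).2], sum_const, nsmul_eq_mul]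
    _ ≤ ((n : ℝ) - 1) * f n := mul_le_mul_of_nonneg_right hcard (hf n)

lemma sum_inv_sq_Icc_le_two (M : ℕ) : ∑ n ∈ Icc 1 M, ((n : ℝ) ^ 2)⁻¹ ≤ 2 := by
  have : Icc 1 M = Ioo 0 (M + 1) := by ext; simp; omega
  simpa [this] using sum_Ioo_inv_sq_le (α := ℝ) 0 (M + 1)

lemma sum_sub_one_div_sq_eq (M : ℕ) :
    ∑ n ∈ Icc 1 M, ((n : ℝ) - 1) / (n : ℝ) ^ 2 = harmonic M - ∑ n ∈ Icc 1 M, ((n : ℝ) ^ 2)⁻¹ := by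
  rw [harmonic_eq_sum_Icc]
  push_cast
  rw [← sum_sub_distrib]
  refine sum_congr rfl fun n hn ↦ ?_
  have : (n : ℝ) ≠ 0 := by have := (mem_Icc.1 hn).1; positivity
  field_simp

lemma log_sub_two_le_sum_sub_one_div_sq (M : ℕ) :
    log M - 2 ≤ ∑ n ∈ Icc 1 M, ((n : ℝ) - 1) / (n : ℝ) ^ 2 := by
  rw [sum_sub_one_div_sq_eq]
  have hlog : log M ≤ log (M + 1 : ℕ) := by
    rcases M.eq_zero_or_pos with rfl | hM
    · simp
    · exact log_le_log (by positivity) (by push_cast; linarith)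
  linarith [log_add_one_le_harmonic M, sum_inv_sq_Icc_le_two M]

lemma sum_sub_one_div_sq_le_one_add_log (M : ℕ) :
    ∑ n ∈ Icc 1 M, ((n : ℝ) - 1) / (n : ℝ) ^ 2 ≤ 1 + log M := by
  rw [sum_sub_one_div_sq_eq]
  have : 0 ≤ ∑ n ∈ Icc 1 M, ((n : ℝ) ^ 2)⁻¹ := sum_nonneg fun _ _ ↦ by positivity
  linarith [harmonic_le_one_add_log M]

lemma rpow_neg_mul_le_exp_neg_mul_sum_sub_one_div_sq {β : ℝ} (hβ : 0 ≤ β) {M : ℕ} (hM : 0 < M) :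
    exp (-β) * (M : ℝ) ^ (-β) ≤ exp (-β * ∑ n ∈ Icc 1 M, ((n : ℝ) - 1) / (n : ℝ) ^ 2) ∧
      exp (-β * ∑ n ∈ Icc 1 M, ((n : ℝ) - 1) / (n : ℝ) ^ 2) ≤ exp (2 * β) * (M : ℝ) ^ (-β) := by
  rw [rpow_def_of_pos (by exact_mod_cast hM), ← exp_add, ← exp_add, exp_le_exp, exp_le_exp]
  constructor
  · nlinarith [sum_sub_one_div_sq_le_one_add_log M]
  · nlinarith [log_sub_two_le_sum_sub_one_div_sq M]

section Percolation

variable {Ω : Type*} [MeasurableSpace Ω] {μ : Measure Ω} [IsProbabilityMeasure μ] {β : ℝ}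
  {N : ℕ} {Edge : ℕ × ℕ → Set Ω}

lemma measure_compl_edge_of_mem_crossingPairs (hβ : 0 ≤ β) (hmeas : ∀ p, MeasurableSet (Edge p))
    (hprob : ∀ j k : ℕ, j + 2 ≤ k → k ≤ N →
      μ (Edge (j, k)) = ENNReal.ofReal (1 - exp (-β / ((k : ℝ) - j) ^ 2)))
    {i : ℕ} {p : ℕ × ℕ} (hp : p ∈ crossingPairs i N) :
    μ (Edge p)ᶜ = ENNReal.ofReal (exp (-(β / ((p.2 - p.1 : ℕ) : ℝ) ^ 2))) := by
  rw [mem_crossingPairs] at hp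
  have hle : exp (-(β / ((p.2 - p.1 : ℕ) : ℝ) ^ 2)) ≤ 1 :=
    exp_le_one_iff.2 (neg_nonpos.2 (by positivity))
  rw [prob_compl_eq_one_sub (hmeas p), hprob p.1 p.2 (by omega) hp.2.2,
    ← Nat.cast_sub (by omega : p.1 ≤ p.2), neg_div, ← ENNReal.ofReal_one,
    ← ENNReal.ofReal_sub _ (sub_nonneg.2 hle), sub_sub_cancel]

lemma ofReal_exp_le_measure_no_crossing_edge (hβ : 0 ≤ β)
    (hmeas : ∀ p, MeasurableSet (Edge p)) (hindep : iIndepSet Edge μ)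
    (hprob : ∀ j k : ℕ, j + 2 ≤ k → k ≤ N →
      μ (Edge (j, k)) = ENNReal.ofReal (1 - exp (-β / ((k : ℝ) - j) ^ 2)))
    (i : ℕ) :
    ENNReal.ofReal (exp (-β * ∑ n ∈ Icc 1 N, ((n : ℝ) - 1) / (n : ℝ) ^ 2))
      ≤ μ (⋂ p ∈ crossingPairs i N, (Edge p)ᶜ) := by
  rw [hindep.measure_biInter_compl,
    prod_congr rfl fun p hp ↦ measure_compl_edge_of_mem_crossingPairs hβ hmeas hprob hp,
    ← ENNReal.ofReal_prod_of_nonneg fun _ _ ↦ (exp_pos _).le, ← exp_sum, sum_neg_distrib, neg_mul]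
  gcongr
  calc ∑ p ∈ crossingPairs i N, β / ((p.2 - p.1 : ℕ) : ℝ) ^ 2
      ≤ ∑ n ∈ Icc 1 N, ((n : ℝ) - 1) * (β / (n : ℝ) ^ 2) :=
        sum_crossingPairs_le (fun n ↦ β / (n : ℝ) ^ 2) fun _ ↦ by positivity
    _ = β * ∑ n ∈ Icc 1 N, ((n : ℝ) - 1) / (n : ℝ) ^ 2 := by
        rw [mul_sum]
        exact sum_congr rfl fun _ _ ↦ by ring

end Percolation

theorem stmt_8_general {Ω : Type*} [MeasurableSpace Ω] (μ : Measure Ω) [IsProbabilityMeasure μ]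
    (β : ℝ) (hβ : 0 < β) (N : ℕ)
    (Edge : ℕ × ℕ → Set Ω) (hmeas : ∀ p, MeasurableSet (Edge p))
    (hindep : iIndepSet Edge μ)
    (hprob : ∀ j k : ℕ, j + 2 ≤ k → k ≤ N →
      μ (Edge (j, k)) = ENNReal.ofReal (1 - Real.exp (-β / ((k : ℝ) - j) ^ 2)))
    (i : ℕ) :
    (ENNReal.ofReal (Real.exp (-β * ∑ n ∈ Finset.Icc 1 N, ((n : ℝ) - 1) / (n : ℝ) ^ 2))
        ≤ μ (⋂ p ∈ {p : ℕ × ℕ | p.1 < i ∧ i < p.2 ∧ p.2 ≤ N}, (Edge p)ᶜ)) ∧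
      ∃ c₁ c₂ : ℝ, 0 < c₁ ∧ 0 < c₂ ∧ ∀ M : ℕ, 1 ≤ M →
        c₁ * (M : ℝ) ^ (-β) ≤
            Real.exp (-β * ∑ n ∈ Finset.Icc 1 M, ((n : ℝ) - 1) / (n : ℝ) ^ 2) ∧
          Real.exp (-β * ∑ n ∈ Finset.Icc 1 M, ((n : ℝ) - 1) / (n : ℝ) ^ 2)
            ≤ c₂ * (M : ℝ) ^ (-β) := by
  have hcrossing : {p : ℕ × ℕ | p.1 < i ∧ i < p.2 ∧ p.2 ≤ N} = crossingPairs i N := by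
    ext
    simp
  refine ⟨?_, exp (-β), exp (2 * β), exp_pos _, exp_pos _, fun M hM ↦
    rpow_neg_mul_le_exp_neg_mul_sum_sub_one_div_sq hβ.le hM⟩
  rw [hcrossing, set_biInter_coe]
  exact ofReal_exp_le_measure_no_crossing_edge hβ.le hmeas hindep hprob i

theorem stmt_8 {Ω : Type*} [MeasurableSpace Ω] (μ : Measure Ω) [IsProbabilityMeasure μ]
    (β : ℝ) (hβ : 0 < β) (N : ℕ) (hN : 2 ≤ N)
    (Edge : ℕ × ℕ → Set Ω) (hmeas : ∀ p, MeasurableSet (Edge p))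
    (hindep : iIndepSet Edge μ)
    (hprob : ∀ j k : ℕ, j + 2 ≤ k → k ≤ N →
      μ (Edge (j, k)) = ENNReal.ofReal (1 - Real.exp (-β / ((k : ℝ) - j) ^ 2)))
    (i : ℕ) (hi : 1 ≤ i) (hi' : i ≤ N - 1) :
    (ENNReal.ofReal (Real.exp (-β * ∑ n ∈ Finset.Icc 1 N, ((n : ℝ) - 1) / (n : ℝ) ^ 2))
        ≤ μ (⋂ p ∈ {p : ℕ × ℕ | p.1 < i ∧ i < p.2 ∧ p.2 ≤ N}, (Edge p)ᶜ)) ∧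
      ∃ c₁ c₂ : ℝ, 0 < c₁ ∧ 0 < c₂ ∧ ∀ M : ℕ, 1 ≤ M →
        c₁ * (M : ℝ) ^ (-β) ≤
            Real.exp (-β * ∑ n ∈ Finset.Icc 1 M, ((n : ℝ) - 1) / (n : ℝ) ^ 2) ∧
          Real.exp (-β * ∑ n ∈ Finset.Icc 1 M, ((n : ℝ) - 1) / (n : ℝ) ^ 2)
            ≤ c₂ * (M : ℝ) ^ (-β) :=
  stmt_8_general μ β hβ N Edge hmeas hindep hprob i
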